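/- Let f be μ-strongly convex and L-smooth, x_1,...,x_N ∈ R^d with average x̄, and η ∈ (0, 1/L]. Then ∑_{i=1}^N ‖x_i − η∇f(x_i) − (x̄ − η ḡ)‖² ≤ (1 − ημ + η²μL) ∑_{i=1}^N ‖x_i − x̄‖², where ḡ = (1/N)∑_i ∇f(x_i). -/

import Mathlib

/-!
The gradient step `T z = z - η • ∇f z` contracts squared distances by the factor `1 - η μ` when
`η ≤ 1 / L`: expanding `‖T x - T y‖²`, the cross term `⟪∇f x - ∇f y, x - y⟫` dominates both
`μ ‖x - y‖²` (strong monotonicity) and `L⁻¹ ‖∇f x - ∇f y‖²` (co-coercivity, via the descent lemma).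
The left-hand side is the sum of squared deviations of the points `T xᵢ` from their mean
`x̄ - η ḡ`, which is at most their sum of squared deviations from `T x̄`; applying the contraction
to each pair `(xᵢ, x̄)` gives the bound already with the factor `1 - η μ`.
-/

open Finset

section GradientInequalities

variable {H : Type*} [NormedAddCommGroup H] [InnerProductSpace ℝ H] [CompleteSpace H]
  {f : H → ℝ} {L μ : ℝ}

theorem hasDerivAt_comp_add_smul (hf : Differentiable ℝ f) (x v : H) (t : ℝ) :
    HasDerivAt (fun t : ℝ => f (x + t • v)) (inner ℝ (gradient f (x + t • v)) v) t := by
  have hline : HasDerivAt (fun t : ℝ => x + t • v) v t := by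
    simpa using ((hasDerivAt_id t).smul_const v).const_add x
  have h := (hf _).hasGradientAt.hasFDerivAt.comp_hasDerivAt t hline
  rwa [InnerProductSpace.toDual_apply_apply] at h

theorem le_add_inner_gradient_add_sq (hf : Differentiable ℝ f)
    (hlip : ∀ x y, ‖gradient f x - gradient f y‖ ≤ L * ‖x - y‖) (x y : H) :
    f y ≤ f x + inner ℝ (gradient f x) (y - x) + L / 2 * ‖y - x‖ ^ 2 := by
  set v := y - x
  let g : ℝ → ℝ := fun t => f (x + t • v) - t * inner ℝ (gradient f x) v - L / 2 * t ^ 2 * ‖v‖ ^ 2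
  have hg : ∀ t, HasDerivAt g
      (inner ℝ (gradient f (x + t • v) - gradient f x) v - L * t * ‖v‖ ^ 2) t := by
    intro t
    refine ((((hasDerivAt_comp_add_smul hf x v t).sub
      ((hasDerivAt_id t).mul_const (inner ℝ (gradient f x) v))).sub
      (((hasDerivAt_pow 2 t).const_mul (L / 2)).mul_const (‖v‖ ^ 2)))).congr_deriv ?_
    rw [inner_sub_left]; push_cast; ring
  have hanti : AntitoneOn g (Set.Icc 0 1) := by
    refine antitoneOn_of_hasDerivWithinAt_nonpos (convex_Icc 0 1)
      (fun t _ => (hg t).continuousAt.continuousWithinAt) (fun t _ => (hg t).hasDerivWithinAt) ?_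
    intro t ht
    rw [interior_Icc] at ht
    rw [sub_nonpos]
    calc inner ℝ (gradient f (x + t • v) - gradient f x) v
        ≤ ‖gradient f (x + t • v) - gradient f x‖ * ‖v‖ := real_inner_le_norm _ _
      _ ≤ L * ‖t • v‖ * ‖v‖ := by
          gcongr
          simpa using hlip (x + t • v) x
      _ = L * t * ‖v‖ ^ 2 := by rw [norm_smul, Real.norm_of_nonneg ht.1.le]; ring
  have h01 := hanti (by simp) (by simp) zero_le_one
  simp only [g, v, one_smul, add_sub_cancel, zero_smul, add_zero] at h01
  linarith

theorem add_inner_gradient_add_inv_mul_sq_le (hf : Differentiable ℝ f) (hL : 0 < L)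
    (hlip : ∀ x y, ‖gradient f x - gradient f y‖ ≤ L * ‖x - y‖)
    (hconv : ∀ x y, f x + inner ℝ (gradient f x) (y - x) ≤ f y) (a b : H) :
    f a + inner ℝ (gradient f a) (b - a) + L⁻¹ / 2 * ‖gradient f b - gradient f a‖ ^ 2 ≤ f b := by
  set v := gradient f b - gradient f a
  -- `b - L⁻¹ • v` is the gradient step from `b` for `z ↦ f z - ⟪∇f a, z⟫`, which is minimal at `a`
  have hlow := hconv a (b - L⁻¹ • v)
  have hup := le_add_inner_gradient_add_sq hf hlip b (b - L⁻¹ • v)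
  have hv : L⁻¹ * inner ℝ (gradient f b) v - L⁻¹ * inner ℝ (gradient f a) v = L⁻¹ * ‖v‖ ^ 2 := by
    rw [← mul_sub, ← inner_sub_left, real_inner_self_eq_norm_sq]
  rw [sub_right_comm, inner_sub_right, real_inner_smul_right] at hlow
  rw [sub_sub_cancel_left, inner_neg_right, real_inner_smul_right, norm_neg, norm_smul,
    Real.norm_of_nonneg (inv_nonneg.2 hL.le)] at hup
  have hsq : L / 2 * (L⁻¹ * ‖v‖) ^ 2 = L⁻¹ / 2 * ‖v‖ ^ 2 := by field_simp
  linarith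

theorem inv_mul_sq_norm_gradient_sub_le_inner (hf : Differentiable ℝ f) (hL : 0 < L)
    (hlip : ∀ x y, ‖gradient f x - gradient f y‖ ≤ L * ‖x - y‖)
    (hconv : ∀ x y, f x + inner ℝ (gradient f x) (y - x) ≤ f y) (x y : H) :
    L⁻¹ * ‖gradient f x - gradient f y‖ ^ 2 ≤ inner ℝ (gradient f x - gradient f y) (x - y) := by
  have hxy := add_inner_gradient_add_inv_mul_sq_le hf hL hlip hconv x y
  have hyx := add_inner_gradient_add_inv_mul_sq_le hf hL hlip hconv y x
  rw [norm_sub_rev, ← neg_sub x y, inner_neg_right] at hxy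
  rw [inner_sub_left]
  linarith

theorem mul_sq_norm_sub_le_inner_gradient_sub
    (hsc : ∀ x y, f x + inner ℝ (gradient f x) (y - x) + (μ / 2) * ‖x - y‖ ^ 2 ≤ f y) (x y : H) :
    μ * ‖x - y‖ ^ 2 ≤ inner ℝ (gradient f x - gradient f y) (x - y) := by
  have hxy := hsc x y
  have hyx := hsc y x
  rw [← neg_sub x y, inner_neg_right] at hxy
  rw [norm_sub_rev] at hyx
  rw [inner_sub_left]
  linarith

theorem norm_gradient_step_sub_sq_le (hf : Differentiable ℝ f) (hL : 0 < L) (hμ : 0 ≤ μ)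
    (hlip : ∀ x y, ‖gradient f x - gradient f y‖ ≤ L * ‖x - y‖)
    (hsc : ∀ x y, f x + inner ℝ (gradient f x) (y - x) + (μ / 2) * ‖x - y‖ ^ 2 ≤ f y)
    {η : ℝ} (hη0 : 0 ≤ η) (hη1 : η ≤ 1 / L) (x y : H) :
    ‖(x - η • gradient f x) - (y - η • gradient f y)‖ ^ 2 ≤ (1 - η * μ) * ‖x - y‖ ^ 2 := by
  have hconv : ∀ x y, f x + inner ℝ (gradient f x) (y - x) ≤ f y := fun x y => by
    have := hsc x y
    have : 0 ≤ μ / 2 * ‖x - y‖ ^ 2 := by positivity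
    linarith
  set u := x - y
  set v := gradient f x - gradient f y
  have hstep : (x - η • gradient f x) - (y - η • gradient f y) = u - η • v := by
    simp only [u, v, smul_sub]; abel
  have hmono := mul_le_mul_of_nonneg_left (mul_sq_norm_sub_le_inner_gradient_sub hsc x y) hη0
  have hcoco := mul_le_mul_of_nonneg_left
    (inv_mul_sq_norm_gradient_sub_le_inner hf hL hlip hconv x y) hη0
  have hη : 0 ≤ η * (L⁻¹ - η) * ‖v‖ ^ 2 := by
    have : 0 ≤ L⁻¹ - η := by rw [← one_div]; linarith
    positivity
  rw [hstep, norm_sub_sq_real, real_inner_smul_right, norm_smul, mul_pow,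
    Real.norm_of_nonneg hη0, real_inner_comm]
  nlinarith

end GradientInequalities

namespace Finset

variable {ι E : Type*}

theorem sum_sub_mean_eq_zero [AddCommGroup E] [Module ℝ E] (s : Finset ι) (y : ι → E) :
    ∑ i ∈ s, (y i - (#s : ℝ)⁻¹ • ∑ j ∈ s, y j) = 0 := by
  rcases s.eq_empty_or_nonempty with rfl | hs
  · simp
  rw [sum_sub_distrib, sum_const, ← Nat.cast_smul_eq_nsmul ℝ,
    smul_inv_smul₀ (by exact_mod_cast hs.card_ne_zero), sub_self]

theorem sum_sq_norm_sub_mean_le [NormedAddCommGroup E] [InnerProductSpace ℝ E]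
    (s : Finset ι) (y : ι → E) (c : E) :
    ∑ i ∈ s, ‖y i - (#s : ℝ)⁻¹ • ∑ j ∈ s, y j‖ ^ 2 ≤ ∑ i ∈ s, ‖y i - c‖ ^ 2 := by
  set m := (#s : ℝ)⁻¹ • ∑ j ∈ s, y j
  have hsplit : ∀ i, ‖y i - c‖ ^ 2 =
      ‖y i - m‖ ^ 2 + 2 * inner ℝ (y i - m) (m - c) + ‖m - c‖ ^ 2 := fun i => by
    rw [← norm_add_sq_real, sub_add_sub_cancel]
  have hzero : ∑ i ∈ s, (y i - m) = 0 := sum_sub_mean_eq_zero s y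
  rw [sum_congr rfl fun i _ => hsplit i, sum_add_distrib, sum_add_distrib, ← mul_sum, ← sum_inner,
    hzero, inner_zero_left, mul_zero, add_zero]
  exact le_add_of_nonneg_right (sum_nonneg fun _ _ => sq_nonneg _)

end Finset

theorem consensus_contraction_general (d N : ℕ)
    (f : EuclideanSpace ℝ (Fin d) → ℝ) (L μ : ℝ) (hL : 0 < L) (hμ : 0 < μ)
    (hdiff : ContDiff ℝ 1 f)
    (hlip : ∀ x y, ‖gradient f x - gradient f y‖ ≤ L * ‖x - y‖)
    (hsc : ∀ x y, f x + inner ℝ (gradient f x) (y - x) + (μ / 2) * ‖x - y‖ ^ 2 ≤ f y)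
    (η : ℝ) (hη0 : 0 < η) (hη1 : η ≤ 1 / L)
    (x : Fin N → EuclideanSpace ℝ (Fin d)) :
    ∑ i, ‖(x i - η • gradient f (x i)) -
        ((N : ℝ)⁻¹ • ∑ j, x j - η • (N : ℝ)⁻¹ • ∑ j, gradient f (x j))‖ ^ 2 ≤
      (1 - η * μ + η ^ 2 * μ * L) * ∑ i, ‖x i - (N : ℝ)⁻¹ • ∑ j, x j‖ ^ 2 := by
  set T : EuclideanSpace ℝ (Fin d) → EuclideanSpace ℝ (Fin d) := fun z => z - η • gradient f z
  set xbar := (N : ℝ)⁻¹ • ∑ j, x j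
  have hmean : xbar - η • (N : ℝ)⁻¹ • ∑ j, gradient f (x j) = (N : ℝ)⁻¹ • ∑ j, T (x j) := by
    rw [sum_sub_distrib, ← smul_sum, smul_sub, smul_comm]
  calc ∑ i, ‖T (x i) - (xbar - η • (N : ℝ)⁻¹ • ∑ j, gradient f (x j))‖ ^ 2
      ≤ ∑ i, ‖T (x i) - T xbar‖ ^ 2 := by
        simpa [hmean] using sum_sq_norm_sub_mean_le univ (T ∘ x) (T xbar)
    _ ≤ ∑ i, (1 - η * μ) * ‖x i - xbar‖ ^ 2 := sum_le_sum fun i _ =>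
        norm_gradient_step_sub_sq_le (hdiff.differentiable one_ne_zero) hL hμ.le hlip hsc
          hη0.le hη1 (x i) xbar
    _ ≤ (1 - η * μ + η ^ 2 * μ * L) * ∑ i, ‖x i - xbar‖ ^ 2 := by
        rw [← mul_sum]
        gcongr
        exact le_add_of_nonneg_right (by positivity)

theorem consensus_contraction (d N : ℕ) (hN : 1 ≤ N)
    (f : EuclideanSpace ℝ (Fin d) → ℝ) (L μ : ℝ) (hL : 0 < L) (hμ : 0 < μ)
    (hdiff : ContDiff ℝ 1 f)
    (hlip : ∀ x y, ‖gradient f x - gradient f y‖ ≤ L * ‖x - y‖)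
    (hsc : ∀ x y, f x + inner ℝ (gradient f x) (y - x) + (μ / 2) * ‖x - y‖ ^ 2 ≤ f y)
    (η : ℝ) (hη0 : 0 < η) (hη1 : η ≤ 1 / L)
    (x : Fin N → EuclideanSpace ℝ (Fin d)) :
    ∑ i, ‖(x i - η • gradient f (x i)) -
        ((N : ℝ)⁻¹ • ∑ j, x j - η • (N : ℝ)⁻¹ • ∑ j, gradient f (x j))‖ ^ 2 ≤
      (1 - η * μ + η ^ 2 * μ * L) * ∑ i, ‖x i - (N : ℝ)⁻¹ • ∑ j, x j‖ ^ 2 :=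
  consensus_contraction_general d N f L μ hL hμ hdiff hlip hsc η hη0 hη1 x
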